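/- arXiv:2301.03493 — 2 statements merged into one kernel-verified Lean document; each statement's English description precedes it below -/
import Mathlib

section
/- Let 0 < ρ₀ < 1, 0 < θ < 1, and η > 0 be reals, and let (Δ_i)_{i≥1} be nonnegative reals with Δ_i ≤ ρ₀^i for all i and ∑_{i=1}^∞ Δ_i = η. Then for every natural number i₀ ≥ 1, ∑_{i=1}^∞ θ^i Δ_i ≥ (η - ρ₀^{i₀}/(1 - ρ₀)) θ^{i₀} + ρ₀^{i₀} θ^{i₀}/(1 - ρ₀ θ). -/
/-!
Weak linear-programming duality. If `a` and `μ i ≤ 0` satisfy `a + μ i ≤ θ ^ i`, then for every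
feasible `Δ` we have `∑ θ ^ i Δ i ≥ ∑ (a + μ i) Δ i ≥ a η + ∑ μ i ρ₀ ^ i`. The bound is this dual
objective for `a = θ ^ i₀` and `μ i = min 0 (θ ^ i - θ ^ i₀)`, which vanishes for `i ≤ i₀`, so that
`∑ μ i ρ₀ ^ i` is a difference of two geometric tails.
-/

theorem le_of_hasSum_of_dual_feasible {ι : Type*} {c x u μ : ι → ℝ} {a s t d : ℝ}
    (hx : ∀ i, 0 ≤ x i) (hxu : ∀ i, x i ≤ u i) (hμ : ∀ i, μ i ≤ 0)
    (hdual : ∀ i, a + μ i ≤ c i) (hs : HasSum x s) (ht : HasSum (fun i ↦ c i * x i) t)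
    (hd : HasSum (fun i ↦ μ i * u i) d) :
    a * s + d ≤ t := by
  have hpointwise (i : ι) : μ i * u i ≤ c i * x i - a * x i := calc
    μ i * u i ≤ μ i * x i := mul_le_mul_of_nonpos_left (hxu i) (hμ i)
    _ ≤ (c i - a) * x i := mul_le_mul_of_nonneg_right (by linarith [hdual i]) (hx i)
    _ = c i * x i - a * x i := by ring
  linarith [hasSum_le hpointwise hd (ht.sub (hs.mul_left a))]

theorem hasSum_ite_le_iff {M : Type*} [AddCommMonoid M] [TopologicalSpace M] {f : ℕ → M}
    {a : M} (n : ℕ) :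
    HasSum (fun i ↦ if n ≤ i then f i else 0) a ↔ HasSum (fun i ↦ f (i + n)) a := by
  rw [← (add_left_injective n).hasSum_iff]
  · simp [Function.comp_def]
  · rintro i hi
    rw [if_neg]
    exact fun hni ↦ hi ⟨i - n, Nat.sub_add_cancel hni⟩

theorem hasSum_geometric_pow_add {K : Type*} [NormedDivisionRing K] {ξ : K} (h : ‖ξ‖ < 1) (k : ℕ) :
    HasSum (fun i ↦ ξ ^ (i + k)) (ξ ^ k * (1 - ξ)⁻¹) := by
  simpa only [← pow_add, add_comm k] using (hasSum_geometric_of_norm_lt_one h).mul_left (ξ ^ k)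

theorem min_zero_pow_sub_pow_eq_ite {θ : ℝ} (h0 : 0 ≤ θ) (h1 : θ ≤ 1) (n i : ℕ) :
    min 0 (θ ^ (i + 1) - θ ^ n) = if n ≤ i then θ ^ (i + 1) - θ ^ n else 0 := by
  split_ifs with h
  · exact min_eq_right (by linarith [pow_le_pow_of_le_one h0 h1 (show n ≤ i + 1 by omega)])
  · exact min_eq_left (by linarith [pow_le_pow_of_le_one h0 h1 (show i + 1 ≤ n by omega)])

theorem hasSum_min_zero_pow_sub_pow_mul_pow {ρ θ : ℝ} (hρ0 : 0 ≤ ρ) (hρ1 : ρ < 1) (hθ0 : 0 ≤ θ)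
    (hθ1 : θ ≤ 1) (n : ℕ) :
    HasSum (fun i ↦ min 0 (θ ^ (i + 1) - θ ^ n) * ρ ^ (i + 1))
      ((ρ * θ) ^ (n + 1) * (1 - ρ * θ)⁻¹ - θ ^ n * (ρ ^ (n + 1) * (1 - ρ)⁻¹)) := by
  have hρ : ‖ρ‖ < 1 := by rwa [Real.norm_of_nonneg hρ0]
  have hρθ : ‖ρ * θ‖ < 1 := by
    rw [Real.norm_of_nonneg (by positivity)]; nlinarith
  have hterm : (fun i ↦ min 0 (θ ^ (i + 1) - θ ^ n) * ρ ^ (i + 1)) =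
      fun i ↦ if n ≤ i then (ρ * θ) ^ (i + 1) - θ ^ n * ρ ^ (i + 1) else 0 := by
    ext i; rw [min_zero_pow_sub_pow_eq_ite hθ0 hθ1]; split_ifs <;> ring
  rw [hterm, hasSum_ite_le_iff]
  simpa only [add_assoc] using ((hasSum_geometric_pow_add hρθ (n + 1)).sub
    ((hasSum_geometric_pow_add hρ (n + 1)).mul_left (θ ^ n)))

theorem weak_duality_lower_bound_general (ρ₀ θ η : ℝ)
    (hρ0 : 0 < ρ₀) (hρ1 : ρ₀ < 1) (hθ0 : 0 < θ) (hθ1 : θ < 1)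
    (Δ : ℕ → ℝ) (hΔ0 : ∀ i, 1 ≤ i → 0 ≤ Δ i)
    (hΔρ : ∀ i, 1 ≤ i → Δ i ≤ ρ₀ ^ i)
    (hsum : ∑' i : ℕ, Δ (i + 1) = η)
    (i₀ : ℕ) :
    (η - ρ₀ ^ i₀ / (1 - ρ₀)) * θ ^ i₀ + ρ₀ ^ i₀ * θ ^ i₀ / (1 - ρ₀ * θ) ≤
      ∑' i : ℕ, θ ^ (i + 1) * Δ (i + 1) := by
  have hΔ_sum : HasSum (fun i ↦ Δ (i + 1)) η := by
    rw [← hsum]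
    refine (Summable.of_nonneg_of_le (fun i ↦ hΔ0 _ i.succ_pos) (fun i ↦ hΔρ _ i.succ_pos) ?_).hasSum
    exact (hasSum_geometric_pow_add (by rwa [Real.norm_of_nonneg hρ0.le]) 1).summable
  have hθΔ_sum : Summable fun i ↦ θ ^ (i + 1) * Δ (i + 1) :=
    Summable.of_nonneg_of_le (fun i ↦ mul_nonneg (by positivity) (hΔ0 _ i.succ_pos))
      (fun i ↦ mul_le_of_le_one_left (hΔ0 _ i.succ_pos) (pow_le_one₀ hθ0.le hθ1.le))
      hΔ_sum.summable
  calc (η - ρ₀ ^ i₀ / (1 - ρ₀)) * θ ^ i₀ + ρ₀ ^ i₀ * θ ^ i₀ / (1 - ρ₀ * θ)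
      = θ ^ i₀ * η + ((ρ₀ * θ) ^ (i₀ + 1) * (1 - ρ₀ * θ)⁻¹
          - θ ^ i₀ * (ρ₀ ^ (i₀ + 1) * (1 - ρ₀)⁻¹)) := by
        have : 1 - ρ₀ ≠ 0 := by linarith
        have : 1 - ρ₀ * θ ≠ 0 := by nlinarith
        field_simp
        ring
    _ ≤ _ := le_of_hasSum_of_dual_feasible (fun i ↦ hΔ0 _ i.succ_pos) (fun i ↦ hΔρ _ i.succ_pos)
        (fun _ ↦ min_le_left _ _) (fun _ ↦ le_sub_iff_add_le'.mp (min_le_right _ _))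
        hΔ_sum hθΔ_sum.hasSum
        (hasSum_min_zero_pow_sub_pow_mul_pow hρ0.le hρ1 hθ0.le hθ1.le i₀)

theorem weak_duality_lower_bound (ρ₀ θ η : ℝ)
    (hρ0 : 0 < ρ₀) (hρ1 : ρ₀ < 1) (hθ0 : 0 < θ) (hθ1 : θ < 1) (hη : 0 < η)
    (Δ : ℕ → ℝ) (hΔ0 : ∀ i, 1 ≤ i → 0 ≤ Δ i)
    (hΔρ : ∀ i, 1 ≤ i → Δ i ≤ ρ₀ ^ i)
    (hsum : ∑' i : ℕ, Δ (i + 1) = η)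
    (i₀ : ℕ) (hi₀ : 1 ≤ i₀) :
    (η - ρ₀ ^ i₀ / (1 - ρ₀)) * θ ^ i₀ + ρ₀ ^ i₀ * θ ^ i₀ / (1 - ρ₀ * θ) ≤
      ∑' i : ℕ, θ ^ (i + 1) * Δ (i + 1) :=
  weak_duality_lower_bound_general ρ₀ θ η hρ0 hρ1 hθ0 hθ1 Δ hΔ0 hΔρ hsum i₀
end

section
/- Let 0 < ρ₀ < 1 and 0 < θ ≤ ρ₀, and set α := ln(θ)/ln(ρ₀) ≥ 1. Let (Δ_i)_{i≥1} be nonnegative reals with Δ_i ≤ ρ₀^i for all i, and set η := ∑_{i=1}^∞ Δ_i, assumed positive. Then ∑_{i=1}^∞ θ^i Δ_i ≥ (ρ₀ θ / (1 - ρ₀ θ)) ((1 - ρ₀) η)^{1+α}. -/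
/-!
Weak LP duality: for every cut `k`, the dual value `θ ^ k` gives
`∑ θ ^ (n + 1) a n ≥ θ ^ k (η - ρ ^ (k + 1) / (1 - ρ)) + (ρ θ) ^ (k + 1) / (1 - ρ θ)`, because the
constraints `a n ≤ ρ ^ (n + 1)` only have to be paid for beyond the cut, where the weights fall
below `θ ^ k`. Cutting at the `k` with `ρ ^ (k + 1) < (1 - ρ) η ≤ ρ ^ k` turns this into
`θ ^ (k + 1) (1 - ρ) η / (1 - ρ θ)`, and `ρ ^ α = θ` bounds `((1 - ρ) η) ^ α` by `θ ^ k`.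
-/

open Finset Real

section GeometricBound

variable {ρ θ : ℝ} {a : ℕ → ℝ}

lemma summable_of_nonneg_of_le_pow_succ (hρ0 : 0 ≤ ρ) (hρ1 : ρ < 1) (ha0 : ∀ n, 0 ≤ a n)
    (haρ : ∀ n, a n ≤ ρ ^ (n + 1)) : Summable a :=
  .of_nonneg_of_le ha0 haρ ((summable_nat_add_iff 1).2 (summable_geometric_of_lt_one hρ0 hρ1))

lemma tsum_le_of_nonneg_of_le_pow_succ (hρ0 : 0 ≤ ρ) (hρ1 : ρ < 1) (ha0 : ∀ n, 0 ≤ a n)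
    (haρ : ∀ n, a n ≤ ρ ^ (n + 1)) : ∑' n, a n ≤ ρ / (1 - ρ) :=
  calc ∑' n, a n ≤ ∑' n, ρ * ρ ^ n := by
        refine (summable_of_nonneg_of_le_pow_succ hρ0 hρ1 ha0 haρ).tsum_le_tsum (fun n => ?_)
          ((summable_geometric_of_lt_one hρ0 hρ1).mul_left ρ)
        rw [← pow_succ']
        exact haρ n
    _ = ρ / (1 - ρ) := by rw [tsum_mul_left, tsum_geometric_of_lt_one hρ0 hρ1, div_eq_mul_inv]

lemma mul_le_max_zero_mul {c x r : ℝ} (hx : 0 ≤ x) (hxr : x ≤ r) : c * x ≤ max c 0 * r :=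
  calc c * x ≤ max c 0 * x := by gcongr; exact le_max_left c 0
    _ ≤ max c 0 * r := by gcongr

theorem le_tsum_pow_succ_mul (hθ0 : 0 ≤ θ) (hθ1 : θ ≤ 1) (hρ0 : 0 ≤ ρ) (hρ1 : ρ < 1)
    (ha0 : ∀ n, 0 ≤ a n) (haρ : ∀ n, a n ≤ ρ ^ (n + 1)) (k : ℕ) :
    θ ^ k * (∑' n, a n - ρ ^ (k + 1) / (1 - ρ)) + (ρ * θ) ^ (k + 1) / (1 - ρ * θ) ≤
      ∑' n, θ ^ (n + 1) * a n := by
  have hρθ0 : 0 ≤ ρ * θ := mul_nonneg hρ0 hθ0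
  have hρθ1 : ρ * θ < 1 := lt_of_le_of_lt (mul_le_of_le_one_right hρ0 hθ1) hρ1
  set f : ℕ → ℝ := fun n => max (θ ^ k - θ ^ (n + 1)) 0 * ρ ^ (n + 1) with hf
  have hf0 : ∀ n, 0 ≤ f n := fun n => by positivity
  have hfρ : ∀ n, f n ≤ ρ ^ (n + 1) := by
    intro n
    have : θ ^ k ≤ 1 := pow_le_one₀ hθ0 hθ1
    have : 0 ≤ θ ^ (n + 1) := pow_nonneg hθ0 _
    exact mul_le_of_le_one_left (by positivity) (max_le (by linarith) zero_le_one)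
  have hfs : Summable f := summable_of_nonneg_of_le_pow_succ hρ0 hρ1 hf0 hfρ
  have has : Summable a := summable_of_nonneg_of_le_pow_succ hρ0 hρ1 ha0 haρ
  have hθas : Summable fun n => θ ^ (n + 1) * a n :=
    .of_nonneg_of_le (fun n => by have := ha0 n; positivity)
      (fun n => mul_le_of_le_one_left (ha0 n) (pow_le_one₀ hθ0 hθ1)) has
  have hf_tail : ∀ n, f (n + k) = θ ^ k * ρ ^ (k + 1) * ρ ^ n - (ρ * θ) ^ (k + 1) * (ρ * θ) ^ n := by
    intro n
    have : θ ^ (n + k + 1) ≤ θ ^ k := pow_le_pow_of_le_one hθ0 hθ1 (by omega)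
    simp only [hf]
    rw [max_eq_left (by linarith)]
    ring
  have htsum_f : ∑' n, f n = θ ^ k * ρ ^ (k + 1) / (1 - ρ) - (ρ * θ) ^ (k + 1) / (1 - ρ * θ) := by
    rw [← hfs.sum_add_tsum_nat_add k, sum_eq_zero fun n hn => ?_, zero_add, tsum_congr hf_tail,
      Summable.tsum_sub ((summable_geometric_of_lt_one hρ0 hρ1).mul_left _)
        ((summable_geometric_of_lt_one hρθ0 hρθ1).mul_left _),
      tsum_mul_left, tsum_mul_left, tsum_geometric_of_lt_one hρ0 hρ1,
      tsum_geometric_of_lt_one hρθ0 hρθ1, div_eq_mul_inv, div_eq_mul_inv]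
    have : θ ^ k ≤ θ ^ (n + 1) := pow_le_pow_of_le_one hθ0 hθ1 (mem_range.1 hn)
    simp only [hf]
    rw [max_eq_right (by linarith), zero_mul]
  have hdual : ∑' n, (θ ^ k * a n - θ ^ (n + 1) * a n) ≤ ∑' n, f n :=
    Summable.tsum_le_tsum (fun n => by rw [← sub_mul]; exact mul_le_max_zero_mul (ha0 n) (haρ n))
      ((has.mul_left _).sub hθas) hfs
  rw [Summable.tsum_sub (has.mul_left _) hθas, tsum_mul_left, htsum_f] at hdual
  linear_combination hdual

theorem pow_succ_mul_div_le_tsum_pow_succ_mul (hθ0 : 0 ≤ θ) (hθ1 : θ ≤ 1) (hρ0 : 0 ≤ ρ)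
    (hρ1 : ρ < 1) (ha0 : ∀ n, 0 ≤ a n) (haρ : ∀ n, a n ≤ ρ ^ (n + 1)) {k : ℕ}
    (hk : ρ ^ (k + 1) ≤ (1 - ρ) * ∑' n, a n) :
    θ ^ (k + 1) * ((1 - ρ) * ∑' n, a n) / (1 - ρ * θ) ≤ ∑' n, θ ^ (n + 1) * a n := by
  refine le_trans ?_ (le_tsum_pow_succ_mul hθ0 hθ1 hρ0 hρ1 ha0 haρ k)
  set η := ∑' n, a n
  have hρ' : 0 < 1 - ρ := sub_pos.2 hρ1
  have hρθ' : 0 < 1 - ρ * θ := by nlinarith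
  have hgap : θ ^ k * (η - ρ ^ (k + 1) / (1 - ρ)) + (ρ * θ) ^ (k + 1) / (1 - ρ * θ)
      - θ ^ (k + 1) * ((1 - ρ) * η) / (1 - ρ * θ)
      = θ ^ k * ((1 - ρ) * η - ρ ^ (k + 1)) * (1 - θ) / ((1 - ρ) * (1 - ρ * θ)) := by
    field_simp [hρ'.ne', hρθ'.ne']
    ring
  have : 0 ≤ θ ^ k * ((1 - ρ) * η - ρ ^ (k + 1)) * (1 - θ) / ((1 - ρ) * (1 - ρ * θ)) := by
    have := sub_nonneg.2 hk
    have := sub_nonneg.2 hθ1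
    positivity
  linarith

end GeometricBound

lemma Real.one_le_logb_of_le_of_base_lt_one {b x : ℝ} (hb0 : 0 < b) (hb1 : b < 1) (hx0 : 0 < x)
    (hxb : x ≤ b) : 1 ≤ logb b x :=
  (le_logb_iff_rpow_le_of_base_lt_one hb0 hb1 hx0).2 (by rwa [rpow_one])

lemma Real.rpow_logb_le_pow_of_le_pow {b x y : ℝ} (hb0 : 0 < b) (hb1 : b ≠ 1) (hx0 : 0 < x)
    (hy0 : 0 ≤ y) (hlogb : 0 ≤ logb b x) {k : ℕ} (hyb : y ≤ b ^ k) : y ^ logb b x ≤ x ^ k :=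
  calc y ^ logb b x ≤ (b ^ k) ^ logb b x := rpow_le_rpow hy0 hyb hlogb
    _ = x ^ k := by rw [← rpow_pow_comm hb0.le, rpow_logb hb0 hb1 hx0]

theorem weighted_sum_poly_lower_bound (ρ₀ θ : ℝ)
    (hρ0 : 0 < ρ₀) (hρ1 : ρ₀ < 1) (hθ0 : 0 < θ) (hθρ : θ ≤ ρ₀)
    (Δ : ℕ → ℝ) (hΔ0 : ∀ i, 1 ≤ i → 0 ≤ Δ i)
    (hΔρ : ∀ i, 1 ≤ i → Δ i ≤ ρ₀ ^ i)
    (η : ℝ) (hη : η = ∑' i : ℕ, Δ (i + 1)) (hηpos : 0 < η)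
    (α : ℝ) (hα : α = Real.log θ / Real.log ρ₀) :
    1 ≤ α ∧
    (ρ₀ * θ / (1 - ρ₀ * θ)) * ((1 - ρ₀) * η) ^ (1 + α) ≤
      ∑' i : ℕ, θ ^ (i + 1) * Δ (i + 1) := by
  rw [log_div_log] at hα
  subst hα hη
  have hα1 : 1 ≤ logb ρ₀ θ := one_le_logb_of_le_of_base_lt_one hρ0 hρ1 hθ0 hθρ
  refine ⟨hα1, ?_⟩
  have hθ1 : θ ≤ 1 := hθρ.trans hρ1.le
  have ha0 : ∀ n, 0 ≤ Δ (n + 1) := fun n => hΔ0 _ (Nat.le_add_left 1 n)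
  have haρ : ∀ n, Δ (n + 1) ≤ ρ₀ ^ (n + 1) := fun n => hΔρ _ (Nat.le_add_left 1 n)
  set x := (1 - ρ₀) * ∑' i : ℕ, Δ (i + 1)
  have hx0 : 0 < x := mul_pos (sub_pos.2 hρ1) hηpos
  have hx1 : x ≤ 1 := by
    have := tsum_le_of_nonneg_of_le_pow_succ hρ0.le hρ1 ha0 haρ
    rw [le_div_iff₀' (sub_pos.2 hρ1)] at this
    linarith
  obtain ⟨k, hkx, hxk⟩ := exists_nat_pow_near_of_lt_one hx0 hx1 hρ0 hρ1
  have hxα : x ^ logb ρ₀ θ ≤ θ ^ k :=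
    rpow_logb_le_pow_of_le_pow hρ0 hρ1.ne hθ0 hx0.le (by linarith) hxk
  calc ρ₀ * θ / (1 - ρ₀ * θ) * x ^ (1 + logb ρ₀ θ)
        = ρ₀ * (θ * x ^ logb ρ₀ θ) * x / (1 - ρ₀ * θ) := by
          rw [rpow_add hx0, rpow_one]; ring
    _ ≤ 1 * (θ * θ ^ k) * x / (1 - ρ₀ * θ) := by
          have : 0 < 1 - ρ₀ * θ := by nlinarith
          gcongr
    _ ≤ ∑' i : ℕ, θ ^ (i + 1) * Δ (i + 1) := by
          rw [one_mul, ← pow_succ']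
          exact pow_succ_mul_div_le_tsum_pow_succ_mul hθ0.le hθ1 hρ0.le hρ1 ha0 haρ hkx.le
end
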